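/- Let u be positively homogeneous of degree α ∈ (0,1), C², and positive on an open cone Ω ⊂ ℝⁿ \ {0}, with det D²u nowhere zero on Ω. Then v := u^{1/α} (a 1-homogeneous function) satisfies σ_{n-1}(D²v) ≠ 0 everywhere on Ω, and σ_{n-1}(D²v) has the sign of det D²u divided by (α−1), i.e. opposite sign to det D²u. -/

import Mathlib

/-!
By Euler's identity for the 1-homogeneous `v`, `∇v(x) ⬝ x = v(x) > 0` and `D²v(x) x = 0`.
A symmetric matrix `M` with `M x = 0`, `x ≠ 0` has adjugate `c • x xᵀ`. Since `u = v ^ α`,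
`D²u = a D²v + b ∇v ∇vᵀ` with `a = α v^(α-1) > 0` and `b = α (α-1) v^(α-2) < 0`, and the matrix
determinant lemma gives `det D²u = b a^(n-1) c (∇v ⬝ x)² = b a^(n-1) c v²`, whereas
`σ_{n-1}(D²v) = tr (adj D²v) = c |x|²`. So `c ≠ 0`, and the product is `b a^(n-1) c² v² |x|² < 0`.
-/

/-- The Hessian matrix of `v` at `x`. -/
noncomputable def hessianMatrix (n : ℕ) (v : EuclideanSpace ℝ (Fin n) → ℝ)
    (x : EuclideanSpace ℝ (Fin n)) : Matrix (Fin n) (Fin n) ℝ :=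
  Matrix.of fun i j =>
    iteratedFDeriv ℝ 2 v x ![EuclideanSpace.single i 1, EuclideanSpace.single j 1]

open Filter Topology Matrix
open scoped Gradient

namespace Matrix

variable {ι R : Type*} [Fintype ι] [DecidableEq ι]

theorem det_add_vecMulVec [CommRing R] (A : Matrix ι ι R) (u w : ι → R) :
    (A + vecMulVec u w).det = A.det + w ⬝ᵥ (A.adjugate *ᵥ u) := by
  -- add `u i • w` to the rows `i ∈ s` one at a time; two rows equal to `w` give a zero determinant
  suffices h : ∀ (s : Finset ι) (A : Matrix ι ι R),
      (A + vecMulVec (fun i => if i ∈ s then u i else 0) w).det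
        = A.det + ∑ i ∈ s, u i * (A.updateRow i w).det by
    have hu := h Finset.univ A
    simp only [Finset.mem_univ, if_true] at hu
    rw [hu, dotProduct_mulVec, ← mulVec_transpose, adjugate_transpose,
      ← cramer_eq_adjugate_mulVec, dotProduct_comm]
    simp only [dotProduct, cramer_transpose_apply]
  intro s
  induction s using Finset.induction_on with
  | empty => intro A; simp [← Pi.zero_def]
  | @insert a s ha ih =>
    intro A
    set B := A + vecMulVec (fun i => if i ∈ s then u i else 0) w
    have hrow : A + vecMulVec (fun i => if i ∈ insert a s then u i else 0) w
        = B.updateRow a (B a + u a • w) := by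
      ext i j
      rcases eq_or_ne i a with rfl | hia
      · simp [B, ha, vecMulVec_apply]
      · simp [B, hia, vecMulVec_apply]
    have hB : B.updateRow a w
        = A.updateRow a w + vecMulVec (fun i => if i ∈ s then u i else 0) w := by
      ext i j
      rcases eq_or_ne i a with rfl | hia
      · simp [B, ha, vecMulVec_apply]
      · simp [B, hia, vecMulVec_apply]
    have hvanish : ∀ i ∈ s, u i * ((A.updateRow a w).updateRow i w).det = 0 := by
      intro i hi
      have hia : i ≠ a := fun h => ha (h ▸ hi)
      rw [det_zero_of_row_eq hia (by simp [updateRow_ne hia.symm]), mul_zero]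
    rw [hrow, det_updateRow_add, det_updateRow_smul, updateRow_eq_self, ih, hB, ih,
      Finset.sum_eq_zero hvanish, Finset.sum_insert ha]
    ring

theorem dotProduct_adjugate_mulVec_eq_zero [CommRing R] [IsDomain R] {M : Matrix ι ι R}
    {x : ι → R} (hx : x ≠ 0) (hMx : M *ᵥ x = 0) (y : ι → R) {z : ι → R} (hzx : z ⬝ᵥ x = 0) :
    z ⬝ᵥ (M.adjugate *ᵥ y) = 0 := by
  have hM : M.det = 0 := exists_mulVec_eq_zero_iff.1 ⟨x, hx, hMx⟩
  have hMyz : (M + vecMulVec y z).det = 0 := by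
    refine exists_mulVec_eq_zero_iff.1 ⟨x, hx, ?_⟩
    rw [add_mulVec, hMx, vecMulVec_mulVec, hzx]
    simp
  rwa [det_add_vecMulVec, hM, zero_add] at hMyz

theorem exists_adjugate_eq_smul_vecMulVec [Field R] {M : Matrix ι ι R} (hM : M.IsSymm)
    {x : ι → R} (hx : x ≠ 0) (hMx : M *ᵥ x = 0) :
    ∃ c : R, M.adjugate = c • vecMulVec x x := by
  obtain ⟨i, hi⟩ : ∃ i, x i ≠ 0 := Function.ne_iff.1 hx
  -- every column of the adjugate is proportional to `x`, tested against `x i • eₖ - x k • eᵢ ⊥ x`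
  have hcol : ∀ k j, M.adjugate k j * x i = x k * M.adjugate i j := by
    intro k j
    have := dotProduct_adjugate_mulVec_eq_zero hx hMx (Pi.single j 1)
      (z := x i • Pi.single k 1 - x k • Pi.single i 1) (by simp [sub_dotProduct]; ring)
    simpa [sub_dotProduct, sub_eq_zero, mul_comm] using this
  have hsymm : ∀ k j, M.adjugate k j = M.adjugate j k := fun k j => by
    rw [← transpose_apply M.adjugate, adjugate_transpose, hM.eq]
  refine ⟨M.adjugate i i / x i ^ 2, ?_⟩
  ext k j
  have h1 := hcol k j
  have h2 := hcol j i
  rw [hsymm i j] at h1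
  rw [smul_apply, vecMulVec_apply, smul_eq_mul]
  field_simp
  linear_combination x i * h1 + x k * h2

theorem det_smul_add_smul_vecMulVec [CommRing R] {M : Matrix ι ι R} (hM : M.det = 0) {c : R}
    {x : ι → R} (hadj : M.adjugate = c • vecMulVec x x) (a b : R) (p : ι → R) :
    (a • M + b • vecMulVec p p).det = b * a ^ (Fintype.card ι - 1) * c * (p ⬝ᵥ x) ^ 2 := by
  rw [← vecMulVec_smul, det_add_vecMulVec, det_smul, hM, adjugate_smul, hadj, smul_smul,
    smul_mulVec, vecMulVec_mulVec]
  simp only [mul_zero, zero_add, dotProduct_smul, smul_dotProduct, smul_eq_mul,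
    MulOpposite.smul_eq_mul_unop, MulOpposite.unop_op]
  rw [dotProduct_comm x]
  ring

theorem trace_adjugate_mul_det_smul_add_smul_vecMulVec_neg [Field R] [LinearOrder R]
    [IsStrictOrderedRing R] {M : Matrix ι ι R} (hM : M.IsSymm) {x p : ι → R}
    (hMx : M *ᵥ x = 0) (hpx : p ⬝ᵥ x ≠ 0) {a b : R} (ha : 0 < a) (hb : b < 0)
    (hdet : (a • M + b • vecMulVec p p).det ≠ 0) :
    M.adjugate.trace ≠ 0 ∧ M.adjugate.trace * (a • M + b • vecMulVec p p).det < 0 := by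
  have hx : x ≠ 0 := by rintro rfl; simp at hpx
  obtain ⟨c, hadj⟩ := exists_adjugate_eq_smul_vecMulVec hM hx hMx
  have hH := det_smul_add_smul_vecMulVec (exists_mulVec_eq_zero_iff.1 ⟨x, hx, hMx⟩) hadj a b p
  have htr : M.adjugate.trace = c * (x ⬝ᵥ x) := by
    rw [hadj, trace_smul, trace_vecMulVec, smul_eq_mul]
  have hxx : 0 < x ⬝ᵥ x :=
    (Fintype.sum_nonneg fun i => mul_self_nonneg (x i)).lt_of_ne' (dotProduct_self_eq_zero.not.2 hx)
  have hc : c ≠ 0 := by rintro rfl; simp [hH] at hdet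
  refine ⟨by rw [htr]; positivity, ?_⟩
  rw [htr, hH, show c * (x ⬝ᵥ x) * (b * a ^ (Fintype.card ι - 1) * c * (p ⬝ᵥ x) ^ 2)
    = b * (a ^ (Fintype.card ι - 1) * c ^ 2 * (x ⬝ᵥ x) * (p ⬝ᵥ x) ^ 2) by ring]
  exact mul_neg_of_neg_of_pos hb (by positivity)

end Matrix

section Homogeneous

variable {E F : Type*} [NormedAddCommGroup E] [NormedSpace ℝ E] [NormedAddCommGroup F]
  [NormedSpace ℝ F] {f : E → F} {x : E}

theorem HasFDerivAt.apply_self_of_homogeneous {f' : E →L[ℝ] F} (k : ℕ) (hf : HasFDerivAt f f' x)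
    (hhom : (fun t : ℝ => f (t • x)) =ᶠ[𝓝 1] fun t => t ^ k • f x) : f' x = k • f x := by
  have hline : HasDerivAt (fun t : ℝ => f (t • x)) (f' x) 1 := by
    rw [← one_smul ℝ x] at hf
    simpa [Function.comp_def] using
      hf.comp_hasDerivAt (1 : ℝ) ((hasDerivAt_id (1 : ℝ)).smul_const x)
  have hpow : HasDerivAt (fun t : ℝ => t ^ k • f x) ((k : ℝ) • f x) 1 := by
    simpa using (hasDerivAt_pow k (1 : ℝ)).smul_const (f x)
  rw [(hline.congr_of_eventuallyEq hhom.symm).unique hpow, Nat.cast_smul_eq_nsmul]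

theorem fderiv_smul_eq_of_homogeneous {t : ℝ} (ht : t ≠ 0)
    (hhom : (fun y => f (t • y)) =ᶠ[𝓝 x] t • f) : fderiv ℝ f (t • x) = fderiv ℝ f x := by
  have h := fderiv_comp_smul (f := f) (x := x) t
  rw [hhom.fderiv_eq, fderiv_const_smul_field] at h
  exact smul_right_injective _ ht h.symm

theorem fderiv_apply_self_of_homogeneous (hf : DifferentiableAt ℝ f x)
    (hhom : ∀ᶠ y in 𝓝 x, ∀ t : ℝ, 0 < t → f (t • y) = t • f y) :
    fderiv ℝ f x x = f x := by
  have := hf.hasFDerivAt.apply_self_of_homogeneous 1 <| by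
    filter_upwards [eventually_gt_nhds one_pos] with t ht
    rw [pow_one, hhom.self_of_nhds t ht]
  simpa using this

theorem fderiv_fderiv_apply_self_of_homogeneous (hf : DifferentiableAt ℝ (fderiv ℝ f) x)
    (hhom : ∀ᶠ y in 𝓝 x, ∀ t : ℝ, 0 < t → f (t • y) = t • f y) :
    fderiv ℝ (fderiv ℝ f) x x = 0 := by
  have := hf.hasFDerivAt.apply_self_of_homogeneous 0 <| by
    filter_upwards [eventually_gt_nhds one_pos] with t ht
    rw [pow_zero, one_smul]
    exact fderiv_smul_eq_of_homogeneous ht.ne' (hhom.mono fun y hy => hy t ht)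
  simpa using this

end Homogeneous

section Hessian

variable {n : ℕ} {v : EuclideanSpace ℝ (Fin n) → ℝ} {x : EuclideanSpace ℝ (Fin n)}

theorem hessianMatrix_apply (i j : Fin n) :
    hessianMatrix n v x i j =
      fderiv ℝ (fderiv ℝ v) x (EuclideanSpace.single i 1) (EuclideanSpace.single j 1) := by
  simp [hessianMatrix, iteratedFDeriv_two_apply]

theorem Filter.EventuallyEq.hessianMatrix_eq {w : EuclideanSpace ℝ (Fin n) → ℝ}
    (h : v =ᶠ[𝓝 x] w) : hessianMatrix n v x = hessianMatrix n w x := by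
  ext i j
  simp only [hessianMatrix, of_apply, (h.iteratedFDeriv ℝ 2).self_of_nhds]

theorem ContDiffAt.hessianMatrix_isSymm (hv : ContDiffAt ℝ 2 v x) :
    (hessianMatrix n v x).IsSymm := by
  have hsymm := hv.isSymmSndFDerivAt (by simp)
  ext i j
  simp only [transpose_apply, hessianMatrix_apply, hsymm _ _]

theorem hessianMatrix_mulVec (y : EuclideanSpace ℝ (Fin n)) :
    hessianMatrix n v x *ᵥ ⇑y =
      fun i => fderiv ℝ (fderiv ℝ v) x (EuclideanSpace.single i 1) y := by
  ext i
  conv_rhs => rw [← (EuclideanSpace.basisFun (Fin n) ℝ).sum_repr y]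
  simp [mulVec, dotProduct, hessianMatrix_apply, mul_comm]

theorem EuclideanSpace.gradient_apply (i : Fin n) :
    (∇ v x) i = fderiv ℝ v x (EuclideanSpace.single i 1) := by
  rw [← inner_gradient_left, real_inner_comm, EuclideanSpace.inner_single_left]
  simp

theorem EuclideanSpace.gradient_dotProduct (y : EuclideanSpace ℝ (Fin n)) :
    ⇑(∇ v x) ⬝ᵥ ⇑y = fderiv ℝ v x y := by
  rw [← inner_gradient_left, EuclideanSpace.inner_eq_star_dotProduct, dotProduct_comm]
  rfl

theorem hessianMatrix_comp {φ φ' : ℝ → ℝ} {φ'' : ℝ}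
    (hφ : ∀ᶠ s in 𝓝 (v x), HasDerivAt φ (φ' s) s) (hφ' : HasDerivAt φ' φ'' (v x))
    (hv : ContDiffAt ℝ 2 v x) :
    hessianMatrix n (φ ∘ v) x =
      φ' (v x) • hessianMatrix n v x + φ'' • vecMulVec ⇑(∇ v x) ⇑(∇ v x) := by
  have hgrad : fderiv ℝ (φ ∘ v) =ᶠ[𝓝 x] fun y => φ' (v y) • fderiv ℝ v y := by
    filter_upwards [hv.continuousAt.eventually hφ, hv.eventually (by simp)] with y hφy hvy
    exact (hφy.comp_hasFDerivAt y (hvy.differentiableAt two_ne_zero).hasFDerivAt).fderiv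
  have hD2 : HasFDerivAt (fderiv ℝ v) (fderiv ℝ (fderiv ℝ v) x) x :=
    ((hv.fderiv_right (m := 1) (by norm_num)).differentiableAt one_ne_zero).hasFDerivAt
  have hHess := ((hφ'.comp_hasFDerivAt x (hv.differentiableAt two_ne_zero).hasFDerivAt).smul
    hD2).congr_of_eventuallyEq hgrad
  ext i j
  simp only [Matrix.add_apply, Matrix.smul_apply, vecMulVec_apply, hessianMatrix_apply,
    EuclideanSpace.gradient_apply, hHess.fderiv, _root_.add_apply, _root_.smul_apply,
    ContinuousLinearMap.smulRight_apply, Function.comp_apply, smul_eq_mul]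
  ring

theorem hessianMatrix_mulVec_self_of_homogeneous (hv : ContDiffAt ℝ 2 v x)
    (hhom : ∀ᶠ y in 𝓝 x, ∀ t : ℝ, 0 < t → v (t • y) = t • v y) :
    hessianMatrix n v x *ᵥ ⇑x = 0 := by
  have hsymm := hv.isSymmSndFDerivAt (by simp)
  have hD2 := (hv.fderiv_right (m := 1) (by norm_num)).differentiableAt one_ne_zero
  ext i
  simp only [hessianMatrix_mulVec, Pi.zero_apply]
  rw [hsymm, fderiv_fderiv_apply_self_of_homogeneous hD2 hhom]
  rfl

theorem hessianMatrix_rpow_comp (hv : ContDiffAt ℝ 2 v x) (hvx : 0 < v x) (α : ℝ) :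
    hessianMatrix n ((· ^ α) ∘ v) x =
      (α * v x ^ (α - 1)) • hessianMatrix n v x +
        (α * ((α - 1) * v x ^ (α - 1 - 1))) • vecMulVec ⇑(∇ v x) ⇑(∇ v x) := by
  refine hessianMatrix_comp ?_ ((Real.hasDerivAt_rpow_const (Or.inl hvx.ne')).const_mul α) hv
  filter_upwards [eventually_gt_nhds hvx] with s hs
  exact Real.hasDerivAt_rpow_const (Or.inl hs.ne')

end Hessian

theorem sigma_of_one_homog_power_sign_general (n : ℕ) (α : ℝ) (hα : α ∈ Set.Ioo (0 : ℝ) 1)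
    (Ω : Set (EuclideanSpace ℝ (Fin n))) (hΩ : IsOpen Ω)
    (u : EuclideanSpace ℝ (Fin n) → ℝ)
    (hreg : ContDiffOn ℝ 2 u Ω) (hpos : ∀ x ∈ Ω, 0 < u x)
    (hhom : ∀ t : ℝ, 0 < t → ∀ x ∈ Ω, u (t • x) = t ^ α * u x)
    (hdet : ∀ x ∈ Ω, (hessianMatrix n u x).det ≠ 0)
    (v : EuclideanSpace ℝ (Fin n) → ℝ) (hv : ∀ x, v x = u x ^ (1 / α)) :
    ∀ x ∈ Ω, (hessianMatrix n v x).adjugate.trace ≠ 0 ∧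
      (hessianMatrix n v x).adjugate.trace * (hessianMatrix n u x).det < 0 := by
  intro x hx
  have hΩx : Ω ∈ 𝓝 x := hΩ.mem_nhds hx
  have hvx : 0 < v x := hv x ▸ Real.rpow_pos_of_pos (hpos x hx) _
  have hvC : ContDiffAt ℝ 2 v x := by
    rw [show v = fun y => u y ^ (1 / α) from funext hv]
    exact (hreg.contDiffAt hΩx).rpow_const_of_ne (hpos x hx).ne'
  have hvhom : ∀ᶠ y in 𝓝 x, ∀ t : ℝ, 0 < t → v (t • y) = t • v y := by
    filter_upwards [hΩx] with y hy t ht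
    rw [hv, hv, hhom t ht y hy, Real.mul_rpow (by positivity) (hpos y hy).le,
      ← Real.rpow_mul ht.le, mul_one_div_cancel hα.1.ne', Real.rpow_one, smul_eq_mul]
  have huv : u =ᶠ[𝓝 x] (· ^ α) ∘ v := by
    filter_upwards [hΩx] with y hy
    rw [Function.comp_apply, hv, ← Real.rpow_mul (hpos y hy).le, one_div_mul_cancel hα.1.ne',
      Real.rpow_one]
  have hdetx := hdet x hx
  rw [huv.hessianMatrix_eq, hessianMatrix_rpow_comp hvC hvx] at hdetx ⊢
  refine trace_adjugate_mul_det_smul_add_smul_vecMulVec_neg hvC.hessianMatrix_isSymm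
    (hessianMatrix_mulVec_self_of_homogeneous hvC hvhom) ?_ (mul_pos hα.1 (by positivity)) ?_
    hdetx
  · rw [EuclideanSpace.gradient_dotProduct,
      fderiv_apply_self_of_homogeneous (hvC.differentiableAt two_ne_zero) hvhom]
    exact hvx.ne'
  · exact mul_neg_of_pos_of_neg hα.1 (mul_neg_of_neg_of_pos (by linarith [hα.2]) (by positivity))

theorem sigma_of_one_homog_power_sign (n : ℕ) (α : ℝ) (hα : α ∈ Set.Ioo (0 : ℝ) 1)
    (Ω : Set (EuclideanSpace ℝ (Fin n))) (hΩ : IsOpen Ω)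
    (hcone : ∀ x ∈ Ω, ∀ t : ℝ, 0 < t → t • x ∈ Ω) (h0 : (0 : EuclideanSpace ℝ (Fin n)) ∉ Ω)
    (u : EuclideanSpace ℝ (Fin n) → ℝ)
    (hreg : ContDiffOn ℝ 2 u Ω) (hpos : ∀ x ∈ Ω, 0 < u x)
    (hhom : ∀ t : ℝ, 0 < t → ∀ x ∈ Ω, u (t • x) = t ^ α * u x)
    (hdet : ∀ x ∈ Ω, (hessianMatrix n u x).det ≠ 0)
    (v : EuclideanSpace ℝ (Fin n) → ℝ) (hv : ∀ x, v x = u x ^ (1 / α)) :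
    ∀ x ∈ Ω, (hessianMatrix n v x).adjugate.trace ≠ 0 ∧
      (hessianMatrix n v x).adjugate.trace * (hessianMatrix n u x).det < 0 :=
  sigma_of_one_homog_power_sign_general n α hα Ω hΩ u hreg hpos hhom hdet v hv
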